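/- Let X be a Banach space. If g ∈ AP(ℝ,X) is almost periodic and φ ∈ PAP₀(ℝ,X) has vanishing mean value, then sup_{t∈ℝ} ‖g(t)‖ ≤ sup_{t∈ℝ} ‖g(t)+φ(t)‖. Consequently the decomposition of a pseudo almost periodic function f = g + φ is unique. -/

import Mathlib

/-!
Suppose `‖g t₀‖ = S + ε` with `S = sup ‖g + φ‖`. The `ε/4`-almost periods of `g` are
relatively dense and, by uniform continuity, each one starts an interval of fixed length `δ`
of `ε/2`-almost periods. For `s` in such an interval `‖g (t₀ + s)‖ ≥ S + ε/2`, hence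
`‖φ (t₀ + s)‖ ≥ ε/2`, so every window of a fixed length carries a fixed positive amount of
`∫ ‖φ‖`, against the vanishing mean of `φ`.

For uniqueness apply this to `g - g₂` and `φ - φ₂`. That `g - g₂` is almost periodic comes
from Bochner's criterion: `g` is almost periodic iff its translates form a totally bounded set
for the uniform distance, and a product of totally bounded sets is totally bounded.
-/

open Set Filter

/-- Bohr almost periodic function. -/
def IsBohrAP {X : Type*} [NormedAddCommGroup X] (g : ℝ → X) : Prop :=
  Continuous g ∧ ∀ ε > (0 : ℝ), ∃ l > (0 : ℝ), ∀ a : ℝ, ∃ T ∈ Icc a (a + l),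
    ∀ t : ℝ, ‖g (t + T) - g t‖ < ε

/-- Bounded continuous function with vanishing Cesàro mean of the norm. -/
def IsPAP0Fun {X : Type*} [NormedAddCommGroup X] (φ : ℝ → X) : Prop :=
  Continuous φ ∧ (∃ M, ∀ t, ‖φ t‖ ≤ M) ∧
    Tendsto (fun L : ℝ => (1 / (2 * L)) * ∫ t in (-L)..L, ‖φ t‖) atTop (nhds 0)

open Topology
open scoped UniformConvergence NNReal

theorem not_tendsto_mean_of_le_integral {f : ℝ → ℝ} (hf : Continuous f) {p c : ℝ}
    (hp : 0 < p) (hc : 0 < c) (hblock : ∀ a, c ≤ ∫ t in a..a + p, f t) :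
    ¬ Tendsto (fun L => (1 / (2 * L)) * ∫ t in (-L)..L, f t) atTop (𝓝 0) := by
  intro hmean
  have hsum : ∀ a (n : ℕ), n * c ≤ ∫ t in a..a + n * p, f t := by
    intro a n
    induction n with
    | zero => simp
    | succ n ih =>
      have hnext := hblock (a + n * p)
      rw [add_assoc, ← add_one_mul] at hnext
      rw [← intervalIntegral.integral_add_adjacent_intervals
        (hf.intervalIntegrable a (a + n * p)) (hf.intervalIntegrable _ _)]
      push_cast
      linarith
  have hL : Tendsto (fun n : ℕ => n * p / 2) atTop atTop :=
    (tendsto_natCast_atTop_atTop.atTop_mul_const hp).atTop_div_const two_pos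
  -- at `L = n p / 2` the interval `[-L, L]` consists of exactly `n` windows
  refine (div_pos hc hp).not_ge (ge_of_tendsto (hmean.comp hL) ?_)
  filter_upwards [eventually_ge_atTop 1] with n hn
  have hn' : (0 : ℝ) < n := by exact_mod_cast hn
  have hwhole := hsum (-(n * p / 2)) n
  rw [show -(n * p / 2) + n * p = n * p / 2 by ring] at hwhole
  calc c / p = 1 / (2 * (n * p / 2)) * (n * c) := by field_simp
    _ ≤ _ := by simp only [Function.comp_apply]; gcongr

theorem TotallyBounded.prod {α β : Type*} [UniformSpace α] [UniformSpace β] {s : Set α}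
    {t : Set β} (hs : TotallyBounded s) (ht : TotallyBounded t) : TotallyBounded (s ×ˢ t) := by
  rw [totallyBounded_iff_ultrafilter] at hs ht ⊢
  intro f hf
  have hf' : s ×ˢ t ∈ (f : Filter (α × β)) := le_principal_iff.1 hf
  have hfst : Cauchy (map Prod.fst (f : Filter (α × β))) :=
    hs (f.map Prod.fst) (le_principal_iff.2 (mem_map.2 (mem_of_superset hf' fun _ hp => hp.1)))
  have hsnd : Cauchy (map Prod.snd (f : Filter (α × β))) :=
    ht (f.map Prod.snd) (le_principal_iff.2 (mem_map.2 (mem_of_superset hf' fun _ hp => hp.2)))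
  exact (hfst.prod hsnd).mono (le_prod.2 ⟨tendsto_map, tendsto_map⟩)

lemma UniformFun.hasBasis_uniformity_dist {α E : Type*} [PseudoMetricSpace E] :
    (uniformity (α →ᵤ E)).HasBasis (fun ε : ℝ => 0 < ε)
      fun ε => UniformFun.gen α E {p | dist p.1 p.2 < ε} :=
  UniformFun.hasBasis_uniformity_of_basis α E Metric.uniformity_basis_dist

def uniformTranslate {E : Type*} (g : ℝ → E) (s : ℝ) : ℝ →ᵤ E :=
  UniformFun.ofFun fun t => g (t + s)

section

variable {E F : Type*} [NormedAddCommGroup E] [NormedAddCommGroup F] {g : ℝ → E}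

theorem IsPAP0Fun.sub {φ φ₂ : ℝ → E} (hφ : IsPAP0Fun φ) (hφ₂ : IsPAP0Fun φ₂) :
    IsPAP0Fun (φ - φ₂) := by
  obtain ⟨hc, ⟨M, hM⟩, hm⟩ := hφ
  obtain ⟨hc₂, ⟨M₂, hM₂⟩, hm₂⟩ := hφ₂
  refine ⟨hc.sub hc₂,
    ⟨M + M₂, fun t => (norm_sub_le _ _).trans (add_le_add (hM t) (hM₂ t))⟩, ?_⟩
  refine squeeze_zero' ?_ ?_ (by simpa only [add_zero] using hm.add hm₂)
  · filter_upwards [eventually_ge_atTop 0] with L hL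
    exact mul_nonneg (by positivity)
      (intervalIntegral.integral_nonneg (by linarith) fun _ _ => norm_nonneg _)
  · filter_upwards [eventually_ge_atTop 0] with L hL
    rw [← mul_add, ← intervalIntegral.integral_add (hc.norm.intervalIntegrable _ _)
      (hc₂.norm.intervalIntegrable _ _)]
    refine mul_le_mul_of_nonneg_left ?_ (by positivity)
    exact intervalIntegral.integral_mono_on (by linarith)
      ((hc.sub hc₂).norm.intervalIntegrable _ _) ((hc.norm.add hc₂.norm).intervalIntegrable _ _)
      fun t _ => norm_sub_le _ _

lemma uniformContinuous_uniformTranslate (hg : UniformContinuous g) :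
    UniformContinuous (uniformTranslate g) := by
  rw [Metric.uniformity_basis_dist.uniformContinuous_iff UniformFun.hasBasis_uniformity_dist]
  intro ε hε
  obtain ⟨δ, hδ, hgδ⟩ := Metric.uniformContinuous_iff.1 hg ε hε
  exact ⟨δ, hδ, fun s r hsr u => hgδ (by rwa [dist_add_left])⟩

theorem IsBohrAP.uniformContinuous (hg : IsBohrAP g) : UniformContinuous g := by
  rw [Metric.uniformContinuous_iff]
  intro ε hε
  obtain ⟨l, -, hl⟩ := hg.2 (ε / 3) (by positivity)
  obtain ⟨δ, hδ, hgδ⟩ := Metric.uniformContinuousOn_iff.1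
    ((isCompact_Icc (a := -1) (b := l + 1)).uniformContinuousOn_of_continuous hg.1.continuousOn)
    (ε / 3) (by positivity)
  refine ⟨min δ 1, by positivity, fun {a b} hab => ?_⟩
  obtain ⟨T, hT, hTa⟩ := hl (-a)
  have hab' := abs_lt.1 (Real.dist_eq a b ▸ hab.trans_le (min_le_right δ 1))
  have haT : a + T ∈ Icc (-1) (l + 1) := ⟨by linarith [hT.1], by linarith [hT.2]⟩
  have hbT : b + T ∈ Icc (-1) (l + 1) := ⟨by linarith [hT.1], by linarith [hT.2]⟩
  have hshift : dist (g (a + T)) (g (b + T)) < ε / 3 :=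
    hgδ _ haT _ hbT (by rw [dist_add_right]; exact hab.trans_le (min_le_left δ 1))
  calc dist (g a) (g b)
      ≤ dist (g a) (g (a + T)) + dist (g (a + T)) (g (b + T)) + dist (g (b + T)) (g b) :=
        dist_triangle4 _ _ _ _
    _ < ε / 3 + ε / 3 + ε / 3 := by
        gcongr
        · rw [dist_comm, dist_eq_norm]; exact hTa a
        · rw [dist_eq_norm]; exact hTa b
    _ = ε := by ring

theorem IsBohrAP.totallyBounded_range_uniformTranslate (hg : IsBohrAP g) :
    TotallyBounded (range (uniformTranslate g)) := by
  rw [UniformFun.hasBasis_uniformity_dist.totallyBounded_iff]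
  intro ε hε
  obtain ⟨l, -, hl⟩ := hg.2 (ε / 2) (half_pos hε)
  obtain ⟨t, htfin, hKt⟩ := UniformFun.hasBasis_uniformity_dist.totallyBounded_iff.1
    ((totallyBounded_Icc 0 l).image (uniformContinuous_uniformTranslate hg.uniformContinuous))
    (ε / 2) (half_pos hε)
  refine ⟨t, htfin, ?_⟩
  rintro _ ⟨s, rfl⟩
  obtain ⟨T, hT, hTs⟩ := hl (-s)
  obtain ⟨y, hyt, hy⟩ := mem_iUnion₂.1 (hKt (mem_image_of_mem _
    (show s + T ∈ Icc 0 l from ⟨by linarith [hT.1], by linarith [hT.2]⟩)))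
  refine mem_iUnion₂.2 ⟨y, hyt, fun u => ?_⟩
  calc dist (g (u + s)) (UniformFun.toFun y u)
      ≤ dist (g (u + s)) (g (u + (s + T))) + dist (g (u + (s + T))) (UniformFun.toFun y u) :=
        dist_triangle _ _ _
    _ < ε / 2 + ε / 2 := by
        refine add_lt_add ?_ (hy u)
        rw [dist_comm, dist_eq_norm, ← add_assoc]; exact hTs _
    _ = ε := add_halves ε

theorem isBohrAP_of_totallyBounded (hc : Continuous g)
    (hg : TotallyBounded (range (uniformTranslate g))) : IsBohrAP g := by
  refine ⟨hc, fun ε hε => ?_⟩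
  obtain ⟨t, hts, htfin, hcover⟩ :=
    totallyBounded_iff_subset.1 hg _ (UniformFun.hasBasis_uniformity_dist.mem_of_mem hε)
  obtain ⟨L, hL, hRL⟩ :=
    (htfin.image (Function.invFun (uniformTranslate g))).isBounded.subset_closedBall_lt 0 0
  -- `t` consists of translates by `|r| ≤ L`; the one near the translate by `a + L` gives the
  -- almost period `a + L - r ∈ [a, a + 2L]`
  refine ⟨2 * L, by positivity, fun a => ?_⟩
  obtain ⟨y, hyt, hy⟩ := mem_iUnion₂.1 (hcover (mem_range_self (a + L)))
  set r := Function.invFun (uniformTranslate g) y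
  have hr : |r| ≤ L := by simpa using hRL (mem_image_of_mem _ hyt)
  rw [← Function.invFun_eq (hts hyt)] at hy
  refine ⟨a + L - r, ⟨by linarith [le_abs_self r], by linarith [neg_abs_le r]⟩, fun u => ?_⟩
  have hu : dist (g (u - r + (a + L))) (g (u - r + r)) < ε := hy (u - r)
  rwa [dist_eq_norm, sub_add_cancel, sub_add_eq_add_sub, add_sub_assoc] at hu

theorem IsBohrAP.isBounded_range (hg : IsBohrAP g) : Bornology.IsBounded (range g) := by
  have := (hg.totallyBounded_range_uniformTranslate.image
    (UniformFun.uniformContinuous_eval E (0 : ℝ))).isBounded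
  convert this using 2
  ext s
  simp [uniformTranslate]

theorem IsBohrAP.prodMk {g₂ : ℝ → F} (hg : IsBohrAP g) (hg₂ : IsBohrAP g₂) :
    IsBohrAP fun t => (g t, g₂ t) := by
  refine isBohrAP_of_totallyBounded (hg.1.prodMk hg₂.1) ?_
  rw [← totallyBounded_image_iff
    UniformFun.uniformEquivProdArrow.isUniformEmbedding.isUniformInducing]
  refine (hg.totallyBounded_range_uniformTranslate.prod
    hg₂.totallyBounded_range_uniformTranslate).subset ?_
  rintro _ ⟨_, ⟨s, rfl⟩, rfl⟩
  exact ⟨mem_range_self s, mem_range_self s⟩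

theorem IsBohrAP.comp_lipschitzWith {f : E → F} {K : ℝ≥0} (hf : LipschitzWith K f)
    (hg : IsBohrAP g) : IsBohrAP (f ∘ g) := by
  refine ⟨hf.continuous.comp hg.1, fun ε hε => ?_⟩
  obtain ⟨l, hl, hT⟩ := hg.2 (ε / (K + 1)) (by positivity)
  refine ⟨l, hl, fun a => (hT a).imp fun T hT' => ⟨hT'.1, fun t => ?_⟩⟩
  calc ‖f (g (t + T)) - f (g t)‖ ≤ K * ‖g (t + T) - g t‖ := by
        simpa only [dist_eq_norm] using hf.dist_le_mul (g (t + T)) (g t)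
    _ ≤ (K + 1) * ‖g (t + T) - g t‖ := by gcongr; linarith
    _ < (K + 1) * (ε / (K + 1)) := by gcongr; exact hT'.2 t
    _ = ε := by field_simp

theorem IsBohrAP.sub {g₂ : ℝ → E} (hg : IsBohrAP g) (hg₂ : IsBohrAP g₂) :
    IsBohrAP (g - g₂) :=
  (hg.prodMk hg₂).comp_lipschitzWith (f := fun p : E × E => p.1 - p.2)
    (LipschitzWith.prod_fst.sub LipschitzWith.prod_snd)

theorem IsBohrAP.exists_Icc_almostPeriods (hg : IsBohrAP g) {ε : ℝ} (hε : 0 < ε) :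
    ∃ l > 0, ∃ δ > 0, ∀ a, ∃ T ∈ Icc a (a + l), ∀ s ∈ Icc T (T + δ), ∀ t,
      ‖g (t + s) - g t‖ < ε := by
  obtain ⟨l, hl, hT⟩ := hg.2 (ε / 2) (half_pos hε)
  obtain ⟨δ, hδ, hgδ⟩ :=
    Metric.uniformContinuous_iff.1 hg.uniformContinuous (ε / 2) (half_pos hε)
  refine ⟨l, hl, δ / 2, half_pos hδ, fun a =>
    (hT a).imp fun T hT' => ⟨hT'.1, fun s hs t => ?_⟩⟩
  have hclose : ‖g (t + s) - g (t + T)‖ < ε / 2 := by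
    rw [← dist_eq_norm]
    refine hgδ ?_
    rw [dist_add_left, Real.dist_eq, abs_lt]
    constructor <;> linarith [hs.1, hs.2]
  calc ‖g (t + s) - g t‖ ≤ ‖g (t + s) - g (t + T)‖ + ‖g (t + T) - g t‖ :=
        norm_sub_le_norm_sub_add_norm_sub _ _ _
    _ < ε / 2 + ε / 2 := add_lt_add hclose (hT'.2 t)
    _ = ε := add_halves ε

theorem IsBohrAP.exists_le_integral_norm {φ : ℝ → E} (hg : IsBohrAP g) (hφ : Continuous φ)
    {S t₀ : ℝ} (hS : ∀ t, ‖g t + φ t‖ ≤ S) (ht₀ : S < ‖g t₀‖) :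
    ∃ p > 0, ∃ c > 0, ∀ a, c ≤ ∫ t in a..a + p, ‖φ t‖ := by
  obtain ⟨ε, hε, hεS⟩ : ∃ ε > 0, S + ε = ‖g t₀‖ := ⟨_, sub_pos.2 ht₀, by ring⟩
  obtain ⟨l, hl, δ, hδ, hper⟩ := hg.exists_Icc_almostPeriods (half_pos hε)
  refine ⟨l + δ, by positivity, δ * (ε / 2), by positivity, fun a => ?_⟩
  obtain ⟨T, hT, hTs⟩ := hper (a - t₀)
  have hlow : ∀ s ∈ Icc (t₀ + T) (t₀ + T + δ), ε / 2 ≤ ‖φ s‖ := by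
    intro s hs
    have hgs : ‖g (t₀ + (s - t₀)) - g t₀‖ < ε / 2 :=
      hTs (s - t₀) ⟨by linarith [hs.1], by linarith [hs.2]⟩ t₀
    rw [add_sub_cancel] at hgs
    have hgt₀ := norm_sub_norm_le (g t₀) (g s)
    have hgφ := norm_sub_le (g s + φ s) (φ s)
    rw [norm_sub_rev] at hgt₀
    rw [add_sub_cancel_right] at hgφ
    linarith [hS s]
  calc δ * (ε / 2) = ∫ _ in (t₀ + T)..(t₀ + T + δ), ε / 2 := by
        rw [intervalIntegral.integral_const, smul_eq_mul, add_sub_cancel_left]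
    _ ≤ ∫ t in (t₀ + T)..(t₀ + T + δ), ‖φ t‖ :=
        intervalIntegral.integral_mono_on (by linarith) intervalIntegrable_const
          (hφ.norm.intervalIntegrable _ _) hlow
    _ ≤ ∫ t in a..a + (l + δ), ‖φ t‖ :=
        intervalIntegral.integral_mono_interval (by linarith [hT.1]) (by linarith)
          (by linarith [hT.2]) (Eventually.of_forall fun _ => norm_nonneg _)
          (hφ.norm.intervalIntegrable _ _)

theorem IsBohrAP.norm_le_iSup_norm_add {φ : ℝ → E} (hg : IsBohrAP g) (hφ : IsPAP0Fun φ)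
    (t₀ : ℝ) : ‖g t₀‖ ≤ ⨆ t, ‖g t + φ t‖ := by
  obtain ⟨hφc, ⟨M, hM⟩, hmean⟩ := hφ
  obtain ⟨C, hC⟩ := isBounded_iff_forall_norm_le.1 hg.isBounded_range
  have hbdd : BddAbove (range fun t => ‖g t + φ t‖) := ⟨C + M, by
    rintro _ ⟨t, rfl⟩
    exact (norm_add_le _ _).trans (add_le_add (hC _ (mem_range_self t)) (hM t))⟩
  by_contra! hlt
  obtain ⟨p, hp, c, hc, hblock⟩ :=
    hg.exists_le_integral_norm hφc (le_ciSup hbdd) hlt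
  exact not_tendsto_mean_of_le_integral hφc.norm hp hc hblock hmean

theorem IsBohrAP.eq_zero_of_add_eq_zero {φ : ℝ → E} (hg : IsBohrAP g) (hφ : IsPAP0Fun φ)
    (h : g + φ = 0) : g = 0 := by
  funext t
  have := hg.norm_le_iSup_norm_add hφ t
  simp only [← Pi.add_apply, h, Pi.zero_apply, norm_zero, ciSup_const] at this
  exact norm_le_zero_iff.1 this

end

/-- If `g ∈ AP` and `φ ∈ PAP₀` then `sup ‖g‖ ≤ sup ‖g + φ‖`; consequently
the decomposition of a pseudo almost periodic function is unique. -/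
theorem stmt7 {X : Type*} [NormedAddCommGroup X]
    (g φ : ℝ → X) (hg : IsBohrAP g) (hφ : IsPAP0Fun φ) :
    (⨆ t : ℝ, ‖g t‖) ≤ (⨆ t : ℝ, ‖g t + φ t‖) ∧
      ∀ g₂ φ₂ : ℝ → X, IsBohrAP g₂ → IsPAP0Fun φ₂ →
        (∀ t, g t + φ t = g₂ t + φ₂ t) → g = g₂ ∧ φ = φ₂ := by
  refine ⟨ciSup_le (hg.norm_le_iSup_norm_add hφ), fun g₂ φ₂ hg₂ hφ₂ heq => ?_⟩
  have hsum : (g - g₂) + (φ - φ₂) = 0 := by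
    funext t
    simp [sub_add_sub_comm, heq t]
  have hgg : g = g₂ := sub_eq_zero.1 ((hg.sub hg₂).eq_zero_of_add_eq_zero (hφ.sub hφ₂) hsum)
  subst hgg
  exact ⟨rfl, funext fun t => add_left_cancel (heq t)⟩
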